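/- Let n_d ≥ 1, let σ_o, σ̃ > 0 with r_σ = σ̃²/σ_o², and let τ_δ > 0 satisfy r_σ (τ_δ² + τ_δ) < 1. Let X and Z be independent random vectors in ℝ^{n_d} whose coordinates are independent centered Gaussians with variances σ_o² and σ̃² respectively. Let U₁, U₂ ∈ ℝ be fixed (the accurate energies), and let Ũ₂ be the random variable Ũ₂ = U₂ − (1/(2σ_o²)) ( ‖Z‖² − 2⟨X, Z⟩ ) (the low-fidelity energy). Then the modified swapping factor S̃_m = [1 − (τ_δ + τ_δ²) r_σ]^{n_d/2} · exp( τ_δ (U₁ − Ũ₂) ) is an unbiased estimator of S = exp( τ_δ (U₁ − U₂) ), i.e. E[ S̃_m ] = exp( τ_δ (U₁ − U₂) ). -/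

import Mathlib

/-!
With `a = τδ / (2σo²)` the factor `exp (τδ (U₁ − Ut₂))` is `exp (τδ (U₁ − U₂))` times
`∏ᵢ exp (a (Zᵢ² − 2 Xᵢ Zᵢ))`, and by independence the expectation of the product is the `n_d`-th
power of a single integral against the product of the two one-dimensional Gaussians. Integrating
out `Xᵢ` first evaluates the Gaussian moment generating function at `−2aZᵢ`, which leaves
`E exp ((a + 2a²σo²) Zᵢ²) = (1 − 2 (a + 2a²σo²) σt²)^(-1/2) = (1 − (τδ + τδ²) r_σ)^(-1/2)`,
and the prefactor `(1 − (τδ + τδ²) r_σ)^(n_d/2)` cancels its `n_d`-th power.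
-/

open MeasureTheory ProbabilityTheory Real
open scoped NNReal

lemma integral_exp_mul_gaussianReal (μ : ℝ) (v : ℝ≥0) (t : ℝ) :
    ∫ x, exp (t * x) ∂(gaussianReal μ v) = exp (μ * t + v * t ^ 2 / 2) := by
  simpa [mgf] using congrFun (mgf_id_gaussianReal (μ := μ) (v := v)) t

section GaussianSquare

variable {v : ℝ≥0} {b : ℝ}

lemma gaussianPDFReal_mul_exp_mul_sq (hv : v ≠ 0) (x : ℝ) :
    gaussianPDFReal 0 v x * exp (b * x ^ 2)
      = (√(2 * π * v))⁻¹ * exp (-(1 / (2 * v) - b) * x ^ 2) := by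
  have hv' : (v : ℝ) ≠ 0 := mod_cast hv
  rw [gaussianPDFReal_def, mul_assoc, ← exp_add]
  congr 2
  field_simp
  ring

lemma integrable_exp_mul_sq_gaussianReal (h : 2 * b * v < 1) :
    Integrable (fun x ↦ exp (b * x ^ 2)) (gaussianReal 0 v) := by
  rcases eq_or_ne v 0 with rfl | hv
  · simpa using integrable_dirac (f := fun x : ℝ ↦ exp (b * x ^ 2)) (a := 0) (by simp)
  have hp : 0 < 1 / (2 * v) - b := by
    have : (0 : ℝ) < v := by positivity
    rw [sub_pos, lt_div_iff₀ (by positivity)]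
    linarith
  rw [gaussianReal_of_var_ne_zero _ hv, gaussianPDF_def,
    integrable_withDensity_iff_integrable_smul' (by fun_prop)
      (ae_of_all _ fun _ ↦ ENNReal.ofReal_lt_top)]
  simp_rw [ENNReal.toReal_ofReal (gaussianPDFReal_nonneg _ _ _), smul_eq_mul,
    gaussianPDFReal_mul_exp_mul_sq hv]
  exact (integrable_exp_neg_mul_sq hp).const_mul _

lemma integral_exp_mul_sq_gaussianReal (h : 2 * b * v < 1) :
    ∫ x, exp (b * x ^ 2) ∂(gaussianReal 0 v) = (√(1 - 2 * b * v))⁻¹ := by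
  rcases eq_or_ne v 0 with rfl | hv
  · simp
  have hv' : (0 : ℝ) < v := by positivity
  simp_rw [integral_gaussianReal_eq_integral_smul hv, smul_eq_mul,
    gaussianPDFReal_mul_exp_mul_sq hv, integral_const_mul, integral_gaussian]
  rw [← sqrt_inv, ← sqrt_inv, ← sqrt_mul (by positivity)]
  congr 1
  field_simp

end GaussianSquare

section GaussianPair

variable {v w : ℝ≥0} {a : ℝ}

lemma exp_mul_sq_sub_eq_exp_mul_exp (a x z : ℝ) :
    exp (a * (z ^ 2 - 2 * x * z)) = exp (a * z ^ 2) * exp (-2 * a * z * x) := by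
  rw [← exp_add]
  congr 1
  ring

lemma integrable_exp_mul_sq_sub_gaussianReal_prod (h : 2 * (a + 2 * a ^ 2 * v) * w < 1) :
    Integrable (fun q : ℝ × ℝ ↦ exp (a * (q.2 ^ 2 - 2 * q.1 * q.2)))
      ((gaussianReal 0 v).prod (gaussianReal 0 w)) := by
  rw [integrable_prod_iff' (by fun_prop)]
  simp only [exp_mul_sq_sub_eq_exp_mul_exp, norm_mul, norm_of_nonneg (exp_pos _).le,
    integral_const_mul, integral_exp_mul_gaussianReal, zero_mul, zero_add]
  refine ⟨ae_of_all _ fun z ↦ (integrable_exp_mul_gaussianReal _).const_mul _, ?_⟩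
  simp_rw [← exp_add]
  convert integrable_exp_mul_sq_gaussianReal h using 3
  ring

lemma integral_exp_mul_sq_sub_gaussianReal_prod (h : 2 * (a + 2 * a ^ 2 * v) * w < 1) :
    ∫ q, exp (a * (q.2 ^ 2 - 2 * q.1 * q.2)) ∂((gaussianReal 0 v).prod (gaussianReal 0 w))
      = (√(1 - 2 * (a + 2 * a ^ 2 * v) * w))⁻¹ := by
  rw [integral_prod_symm _ (integrable_exp_mul_sq_sub_gaussianReal_prod h)]
  simp only [exp_mul_sq_sub_eq_exp_mul_exp, integral_const_mul, integral_exp_mul_gaussianReal,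
    zero_mul, zero_add]
  simp_rw [← exp_add]
  convert integral_exp_mul_sq_gaussianReal h using 4
  ring

end GaussianPair

lemma integral_prod_apply_eq_pow_of_indepFun {Ω ι E F : Type*} [MeasurableSpace Ω]
    [Fintype ι] [MeasurableSpace E] [MeasurableSpace F] {P : Measure Ω} [IsFiniteMeasure P]
    {μ : Measure E} {ν : Measure F} [SigmaFinite μ] [SigmaFinite ν]
    {X : Ω → ι → E} {Z : Ω → ι → F} (hX : AEMeasurable X P) (hZ : AEMeasurable Z P)
    (hindep : IndepFun X Z P) (hXlaw : P.map X = Measure.pi fun _ ↦ μ)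
    (hZlaw : P.map Z = Measure.pi fun _ ↦ ν) {f : E × F → ℝ} (hf : Measurable f) :
    ∫ ω, ∏ i, f (X ω i, Z ω i) ∂P = (∫ q, f q ∂(μ.prod ν)) ^ Fintype.card ι := by
  have hjoint :
      P.map (fun ω ↦ (X ω, Z ω)) = (Measure.pi fun _ ↦ μ).prod (Measure.pi fun _ ↦ ν) := by
    rw [(indepFun_iff_map_prod_eq_prod_map_map hX hZ).mp hindep, hXlaw, hZlaw]
  have hg : Measurable fun p : (ι → E) × (ι → F) ↦ ∏ i, f (p.1 i, p.2 i) := by fun_prop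
  rw [← integral_map (f := fun p : (ι → E) × (ι → F) ↦ ∏ i, f (p.1 i, p.2 i))
    (hX.prodMk hZ) hg.aestronglyMeasurable, hjoint,
    ← (measurePreserving_arrowProdEquivProdArrow E F ι _ _).integral_comp']
  exact integral_fintype_prod_eq_pow f

lemma rpow_div_two_mul_inv_sqrt_pow {x : ℝ} (hx : 0 < x) (n : ℕ) :
    x ^ ((n : ℝ) / 2) * (√x)⁻¹ ^ n = 1 := by
  rw [div_eq_inv_mul, rpow_mul hx.le, rpow_natCast, ← one_div, ← sqrt_eq_rpow, ← mul_pow,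
    mul_inv_cancel₀ (sqrt_pos.mpr hx).ne', one_pow]

theorem modified_swap_factor_unbiased_general
    {Ω : Type*} [MeasurableSpace Ω] (P : Measure Ω) [IsProbabilityMeasure P]
    (nd : ℕ)
    (σo σt : ℝ) (hσo : 0 < σo)
    (τδ : ℝ)
    (hr : (σt ^ 2 / σo ^ 2) * (τδ ^ 2 + τδ) < 1)
    (X Z : Ω → Fin nd → ℝ) (hX : Measurable X) (hZ : Measurable Z)
    (hindep : IndepFun X Z P)
    (hXlaw : Measure.map X P
      = Measure.pi fun _ : Fin nd => gaussianReal 0 (Real.toNNReal (σo ^ 2)))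
    (hZlaw : Measure.map Z P
      = Measure.pi fun _ : Fin nd => gaussianReal 0 (Real.toNNReal (σt ^ 2)))
    (U₁ U₂ : ℝ)
    (Ut₂ : Ω → ℝ)
    (hUt₂ : ∀ ω, Ut₂ ω = U₂ - (1 / (2 * σo ^ 2)) *
        ((∑ i, (Z ω i) ^ 2) - 2 * ∑ i, X ω i * Z ω i)) :
    ∫ ω, (1 - (τδ + τδ ^ 2) * (σt ^ 2 / σo ^ 2)) ^ ((nd : ℝ) / 2) *
        Real.exp (τδ * (U₁ - Ut₂ ω)) ∂P
      = Real.exp (τδ * (U₁ - U₂)) := by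
  set a := τδ / (2 * σo ^ 2)
  set c := (τδ + τδ ^ 2) * (σt ^ 2 / σo ^ 2)
  have hc_eq : 2 * (a + 2 * a ^ 2 * (σo ^ 2).toNNReal) * (σt ^ 2).toNNReal = c := by
    simp only [Real.coe_toNNReal _ (sq_nonneg _), a, c]
    field_simp
  have hc_lt : c < 1 := by
    simp only [c]
    linarith
  have hsplit : ∀ ω, exp (τδ * (U₁ - Ut₂ ω))
      = exp (τδ * (U₁ - U₂)) * ∏ i, exp (a * ((Z ω i) ^ 2 - 2 * X ω i * Z ω i)) := by
    intro ω
    rw [← exp_sum, ← exp_add, hUt₂, ← Finset.mul_sum, Finset.sum_sub_distrib]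
    simp only [mul_assoc, ← Finset.mul_sum, a]
    congr 1
    ring
  simp_rw [hsplit, ← mul_assoc, integral_const_mul]
  rw [integral_prod_apply_eq_pow_of_indepFun hX.aemeasurable hZ.aemeasurable hindep hXlaw hZlaw
      (f := fun q ↦ exp (a * (q.2 ^ 2 - 2 * q.1 * q.2))) (by fun_prop),
    integral_exp_mul_sq_sub_gaussianReal_prod (hc_eq ▸ hc_lt), hc_eq, Fintype.card_fin,
    mul_right_comm, rpow_div_two_mul_inv_sqrt_pow (sub_pos.mpr hc_lt), one_mul]

/-- Unbiasedness of the modified swapping factor in the multi-variance replica exchange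
method: with `Ut₂ = U₂ − (1/(2σ_o²))(‖Z‖² − 2⟨X,Z⟩)` the low-fidelity energy, the factor
`S̃_m = (1 − (τ_δ + τ_δ²) r_σ)^{n_d/2} exp(τ_δ(U₁ − Ut₂))` satisfies
`E[S̃_m] = exp(τ_δ(U₁ − U₂))`. -/
theorem modified_swap_factor_unbiased
    {Ω : Type*} [MeasurableSpace Ω] (P : Measure Ω) [IsProbabilityMeasure P]
    (nd : ℕ) (hnd : 1 ≤ nd)
    (σo σt : ℝ) (hσo : 0 < σo) (hσt : 0 < σt)
    (τδ : ℝ) (hτδ : 0 < τδ)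
    (hr : (σt ^ 2 / σo ^ 2) * (τδ ^ 2 + τδ) < 1)
    (X Z : Ω → Fin nd → ℝ) (hX : Measurable X) (hZ : Measurable Z)
    (hindep : IndepFun X Z P)
    (hXlaw : Measure.map X P
      = Measure.pi fun _ : Fin nd => gaussianReal 0 (Real.toNNReal (σo ^ 2)))
    (hZlaw : Measure.map Z P
      = Measure.pi fun _ : Fin nd => gaussianReal 0 (Real.toNNReal (σt ^ 2)))
    (U₁ U₂ : ℝ)
    (Ut₂ : Ω → ℝ)
    (hUt₂ : ∀ ω, Ut₂ ω = U₂ - (1 / (2 * σo ^ 2)) *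
        ((∑ i, (Z ω i) ^ 2) - 2 * ∑ i, X ω i * Z ω i)) :
    ∫ ω, (1 - (τδ + τδ ^ 2) * (σt ^ 2 / σo ^ 2)) ^ ((nd : ℝ) / 2) *
        Real.exp (τδ * (U₁ - Ut₂ ω)) ∂P
      = Real.exp (τδ * (U₁ - U₂)) :=
  modified_swap_factor_unbiased_general P nd σo σt hσo τδ hr X Z hX hZ hindep hXlaw hZlaw U₁ U₂ Ut₂
    hUt₂
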